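/- arXiv:1002.3093 — 4 statements merged into one kernel-verified Lean document; each statement's English description precedes it below -/
import Mathlib

section
/- Let Z be a (G,H)-equivalence and let L = G ⊔ Z ⊔ Z^op ⊔ H with unit space L^(0) = G^(0) ⊔ H^(0), with range and source maps inherited from G, Z, Z^op, H, multiplication restricting to multiplication on G and H and to the actions of G and H on Z and Z^op, together with z·ȳ = _G[z,y] (for s(z)=s(y)) and ȳ·z = [y,z]_H (for r(y)=r(z)), and inversion restricting to inversion on G and H and swapping z ↔ z̄. Then L is a groupoid. -/
open MeasureTheory Topology

/-- A (topological) groupoid: a space `G` with range and source maps `r s : G → G`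
(whose common image is the unit space), a partially defined multiplication and an
inversion, all continuous. -/
structure TopGpd (G : Type*) [TopologicalSpace G] where
  r : G → G
  s : G → G
  mul : (x y : G) → s x = r y → G
  inv : G → G
  r_r : ∀ x, r (r x) = r x
  s_r : ∀ x, s (r x) = r x
  r_s : ∀ x, r (s x) = s x
  s_s : ∀ x, s (s x) = s x
  r_mul : ∀ x y h, r (mul x y h) = r x
  s_mul : ∀ x y h, s (mul x y h) = s y
  unit_mul : ∀ x (h : s (r x) = r x), mul (r x) x h = x
  mul_unit : ∀ x (h : s x = r (s x)), mul x (s x) h = x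
  mul_assoc : ∀ x y z (h₁ : s x = r y) (h₂ : s y = r z)
      (h₃ : s (mul x y h₁) = r z) (h₄ : s x = r (mul y z h₂)),
      mul (mul x y h₁) z h₃ = mul x (mul y z h₂) h₄
  r_inv : ∀ x, r (inv x) = s x
  s_inv : ∀ x, s (inv x) = r x
  inv_mul : ∀ x (h : s (inv x) = r x), mul (inv x) x h = s x
  mul_inv : ∀ x (h : s x = r (inv x)), mul x (inv x) h = r x
  cont_r : Continuous r
  cont_s : Continuous s
  cont_inv : Continuous inv
  cont_mul : Continuous fun p : {p : G × G // s p.1 = r p.2} => mul p.1.1 p.1.2 p.2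

/-- A `(G,H)`-equivalence: a locally compact space `Z` with commuting free and proper
left `G`- and right `H`-actions whose moment maps `ρ` and `σ` are continuous, open,
and induce bijections `Z/H ≅ G⁰` and `G\Z ≅ H⁰`. -/
structure GpdEquiv {G H : Type*} [TopologicalSpace G] [TopologicalSpace H]
    (𝒢 : TopGpd G) (ℋ : TopGpd H) (Z : Type*) [TopologicalSpace Z] where
  ρ : Z → G
  σ : Z → H
  ρ_unit : ∀ z, 𝒢.r (ρ z) = ρ z
  σ_unit : ∀ z, ℋ.r (σ z) = σ z
  ρ_cont : Continuous ρ
  σ_cont : Continuous σ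
  ρ_open : IsOpenMap ρ
  σ_open : IsOpenMap σ
  lact : (γ : G) → (z : Z) → 𝒢.s γ = ρ z → Z
  ract : (z : Z) → (η : H) → σ z = ℋ.r η → Z
  ρ_lact : ∀ γ z h, ρ (lact γ z h) = 𝒢.r γ
  σ_lact : ∀ γ z h, σ (lact γ z h) = σ z
  ρ_ract : ∀ z η h, ρ (ract z η h) = ρ z
  σ_ract : ∀ z η h, σ (ract z η h) = ℋ.s η
  lact_unit : ∀ z (h : 𝒢.s (ρ z) = ρ z), lact (ρ z) z h = z
  ract_unit : ∀ z (h : σ z = ℋ.r (σ z)), ract z (σ z) h = z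
  lact_mul : ∀ γ γ' z (h : 𝒢.s γ = 𝒢.r γ') (h' : 𝒢.s γ' = ρ z)
      (h'' : 𝒢.s (𝒢.mul γ γ' h) = ρ z) (h''' : 𝒢.s γ = ρ (lact γ' z h')),
      lact (𝒢.mul γ γ' h) z h'' = lact γ (lact γ' z h') h'''
  ract_mul : ∀ z η η' (h : σ z = ℋ.r η) (h' : ℋ.s η = ℋ.r η')
      (h'' : σ z = ℋ.r (ℋ.mul η η' h')) (h''' : σ (ract z η h) = ℋ.r η'),
      ract z (ℋ.mul η η' h') h'' = ract (ract z η h) η' h'''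
  act_comm : ∀ γ z η (h₁ : 𝒢.s γ = ρ z) (h₂ : σ z = ℋ.r η)
      (h₃ : σ (lact γ z h₁) = ℋ.r η) (h₄ : 𝒢.s γ = ρ (ract z η h₂)),
      ract (lact γ z h₁) η h₃ = lact γ (ract z η h₂) h₄
  lact_free : ∀ γ z h, lact γ z h = z → γ = ρ z
  ract_free : ∀ z η h, ract z η h = z → η = σ z
  lact_cont : Continuous fun p : {p : G × Z // 𝒢.s p.1 = ρ p.2} =>
      lact p.1.1 p.1.2 p.2
  ract_cont : Continuous fun p : {p : Z × H // σ p.1 = ℋ.r p.2} =>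
      ract p.1.1 p.1.2 p.2
  lact_proper : IsProperMap fun p : {p : G × Z // 𝒢.s p.1 = ρ p.2} =>
      (lact p.1.1 p.1.2 p.2, p.1.2)
  ract_proper : IsProperMap fun p : {p : Z × H // σ p.1 = ℋ.r p.2} =>
      (ract p.1.1 p.1.2 p.2, p.1.1)
  ρ_surj : ∀ u, 𝒢.r u = u → ∃ z, ρ z = u
  σ_surj : ∀ v, ℋ.r v = v → ∃ z, σ z = v
  ρ_orbit : ∀ y z, ρ y = ρ z → ∃ η h, ract z η h = y
  σ_orbit : ∀ y z, σ y = σ z → ∃ γ h, lact γ z h = y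

/-- Inclusion of `G` into the linking space `L = G ⊔ Z ⊔ Z^op ⊔ H`. -/
def inG {G Z H : Type*} (γ : G) : G ⊕ Z ⊕ Z ⊕ H := Sum.inl γ

/-- Inclusion of `Z` into the linking space. -/
def inZ {G Z H : Type*} (z : Z) : G ⊕ Z ⊕ Z ⊕ H := Sum.inr (Sum.inl z)

/-- Inclusion of `Z^op` (a second copy of `Z`, `z ↦ z̄`) into the linking space. -/
def inZo {G Z H : Type*} (z : Z) : G ⊕ Z ⊕ Z ⊕ H := Sum.inr (Sum.inr (Sum.inl z))

/-- Inclusion of `H` into the linking space. -/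
def inH {G Z H : Type*} (η : H) : G ⊕ Z ⊕ Z ⊕ H := Sum.inr (Sum.inr (Sum.inr η))

/-! The groupoid axioms are checked on the pieces of `L = G ⊔ Z ⊔ Z^op ⊔ H`. In the mixed
cases they become identities between the brackets and the two actions, and each such identity
says that two elements act in the same way on some point of `Z`, so it follows from freeness of
the actions (equivalently, uniqueness of the brackets). For instance
`_G[x,y]·(y·[y,z]_H) = x·[y,z]_H` holds because `_G[x,y]·y = x` and the actions commute.

For continuity, `(γ, z) ↦ (γ·z, z)` is proper and injective, hence a homeomorphism onto
`{(y, z) | σ y = σ z}`, and `_G[y,z]` is the first coordinate of its inverse; likewise for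
`[y,z]_H`. The composable pairs of `L` split into open pieces such as `Z × Z^op`, and on each
of them the multiplication is one of these continuous maps. -/

theorem Topology.IsEmbedding.continuous_of_eq_comp {X Y P W : Type*} [TopologicalSpace X]
    [TopologicalSpace Y] [TopologicalSpace P] [TopologicalSpace W] {F : X → Y}
    (hF : IsEmbedding F) {j : P → Y} (hj : Continuous j) (hjF : ∀ p, j p ∈ Set.range F)
    {g : P → W} {k : X → W} (hk : Continuous k) (hg : ∀ x p, F x = j p → g p = k x) :
    Continuous g := by
  choose ℓ hℓ using hjF
  have hℓc : Continuous ℓ := hF.continuous_iff.2 (by simpa [Function.comp_def, hℓ] using hj)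
  rw [show g = k ∘ ℓ from funext fun p => hg _ _ (hℓ p)]
  exact hk.comp hℓc

theorem continuousAt_of_isOpenEmbedding_prod {α β L W : Type*} [TopologicalSpace α]
    [TopologicalSpace β] [TopologicalSpace L] [TopologicalSpace W] {i : α → L} {j : β → L}
    (hi : IsOpenEmbedding i) (hj : IsOpenEmbedding j) {Q : L × L → Prop} {P : α × β → Prop}
    {g : {p // P p} → W} (hg : Continuous g) (hQP : ∀ a b, Q (i a, j b) → P (a, b))
    {f : {q // Q q} → W} (hfg : ∀ a b h, f ⟨(i a, j b), h⟩ = g ⟨(a, b), hQP a b h⟩)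
    (a : α) (b : β) (h : Q (i a, j b)) : ContinuousAt f ⟨(i a, j b), h⟩ := by
  have hf : Continuous fun p : {p : α × β // Q (i p.1, j p.2)} => f ⟨(i p.1.1, j p.1.2), p.2⟩ := by
    simp only [hfg]
    exact hg.comp (continuous_subtype_val.subtype_mk _)
  exact ((hi.prodMap hj).restrictPreimage {q | Q q}).continuousAt_iff (x := ⟨(a, b), h⟩) |>.mp
    hf.continuousAt

namespace TopGpd

variable {K : Type*} [TopologicalSpace K] (𝒦 : TopGpd K)

theorem mul_congr {x x' y y' : K} (hx : x = x') (hy : y = y') (h : 𝒦.s x = 𝒦.r y)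
    (h' : 𝒦.s x' = 𝒦.r y') : 𝒦.mul x y h = 𝒦.mul x' y' h' := by
  subst hx hy; rfl

theorem eq_inv_of_mul_eq_r {x y : K} (h : 𝒦.s x = 𝒦.r y) (he : 𝒦.mul x y h = 𝒦.r x) :
    y = 𝒦.inv x := by
  have hx : 𝒦.s (𝒦.inv x) = 𝒦.r x := 𝒦.s_inv x
  calc y = 𝒦.mul (𝒦.r y) y (𝒦.s_r y) := (𝒦.unit_mul y _).symm
    _ = 𝒦.mul (𝒦.mul (𝒦.inv x) x hx) y (by rw [𝒦.s_mul, h]) :=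
        𝒦.mul_congr (by rw [𝒦.inv_mul, h]) rfl _ _
    _ = 𝒦.mul (𝒦.inv x) (𝒦.mul x y h) (by rw [𝒦.r_mul, hx]) := 𝒦.mul_assoc _ _ _ _ _ _ _
    _ = 𝒦.mul (𝒦.inv x) (𝒦.s (𝒦.inv x)) (𝒦.r_s _).symm :=
        𝒦.mul_congr rfl (he.trans hx.symm) _ _
    _ = 𝒦.inv x := 𝒦.mul_unit _ _

theorem inv_inv (x : K) : 𝒦.inv (𝒦.inv x) = x :=
  (𝒦.eq_inv_of_mul_eq_r (𝒦.s_inv x) (by rw [𝒦.inv_mul, 𝒦.r_inv])).symm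

theorem inv_injective : Function.Injective 𝒦.inv :=
  Function.LeftInverse.injective 𝒦.inv_inv

theorem inv_eq_self {u : K} (hu : 𝒦.r u = u) : 𝒦.inv u = u := by
  have hs : 𝒦.s u = 𝒦.r u := by rw [← hu, 𝒦.s_r, 𝒦.r_r]
  refine (𝒦.eq_inv_of_mul_eq_r hs ?_).symm
  calc 𝒦.mul u u hs = 𝒦.mul (𝒦.r u) u (𝒦.s_r u) := 𝒦.mul_congr hu.symm rfl _ _
    _ = 𝒦.r u := (𝒦.unit_mul u _).trans hu.symm

theorem mul_inv_rev {x y : K} (h : 𝒦.s x = 𝒦.r y) (h' : 𝒦.s (𝒦.inv y) = 𝒦.r (𝒦.inv x)) :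
    𝒦.inv (𝒦.mul x y h) = 𝒦.mul (𝒦.inv y) (𝒦.inv x) h' := by
  have hy : 𝒦.s y = 𝒦.r (𝒦.inv y) := (𝒦.r_inv y).symm
  have hxyy : 𝒦.mul (𝒦.mul x y h) (𝒦.inv y) (by rw [𝒦.s_mul, hy]) = x :=
    calc _ = 𝒦.mul x (𝒦.mul y (𝒦.inv y) hy) (by rw [𝒦.r_mul, h]) := 𝒦.mul_assoc _ _ _ _ _ _ _
      _ = 𝒦.mul x (𝒦.s x) (𝒦.r_s x).symm := 𝒦.mul_congr rfl (by rw [𝒦.mul_inv, h]) _ _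
      _ = x := 𝒦.mul_unit x _
  refine (𝒦.eq_inv_of_mul_eq_r (by rw [𝒦.s_mul, 𝒦.r_mul, 𝒦.r_inv]) ?_).symm
  calc _ = 𝒦.mul (𝒦.mul (𝒦.mul x y h) (𝒦.inv y) (by rw [𝒦.s_mul, hy])) (𝒦.inv x)
          (by rw [𝒦.s_mul, 𝒦.s_inv, 𝒦.r_inv, h]) := (𝒦.mul_assoc _ _ _ _ _ _ _).symm
    _ = 𝒦.mul x (𝒦.inv x) (𝒦.r_inv x).symm := 𝒦.mul_congr hxyy rfl _ _
    _ = 𝒦.r (𝒦.mul x y h) := by rw [𝒦.mul_inv, 𝒦.r_mul]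

end TopGpd

section Inclusions

variable {G Z H : Type*}

theorem inG_injective : Function.Injective (inG : G → G ⊕ Z ⊕ Z ⊕ H) :=
  fun _ _ h => Sum.inl.inj h

theorem inH_injective : Function.Injective (inH : H → G ⊕ Z ⊕ Z ⊕ H) :=
  fun _ _ h => Sum.inr.inj (Sum.inr.inj (Sum.inr.inj h))

variable [TopologicalSpace G] [TopologicalSpace Z] [TopologicalSpace H]

theorem isOpenEmbedding_inG : IsOpenEmbedding (inG : G → G ⊕ Z ⊕ Z ⊕ H) :=
  .inl

theorem isOpenEmbedding_inZ : IsOpenEmbedding (inZ : Z → G ⊕ Z ⊕ Z ⊕ H) :=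
  .comp .inr .inl

theorem isOpenEmbedding_inZo : IsOpenEmbedding (inZo : Z → G ⊕ Z ⊕ Z ⊕ H) :=
  .comp .inr (.comp .inr .inl)

theorem isOpenEmbedding_inH : IsOpenEmbedding (inH : H → G ⊕ Z ⊕ Z ⊕ H) :=
  .comp .inr (.comp .inr .inr)

end Inclusions

namespace GpdEquiv

variable {G H Z : Type*} [TopologicalSpace G] [TopologicalSpace H] [TopologicalSpace Z]
  {𝒢 : TopGpd G} {ℋ : TopGpd H} (E : GpdEquiv 𝒢 ℋ Z)

theorem lact_congr {γ γ' : G} {z z' : Z} (hγ : γ = γ') (hz : z = z')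
    (p : 𝒢.s γ = E.ρ z) (p' : 𝒢.s γ' = E.ρ z') : E.lact γ z p = E.lact γ' z' p' := by
  subst hγ hz; rfl

theorem ract_congr {z z' : Z} {η η' : H} (hz : z = z') (hη : η = η')
    (p : E.σ z = ℋ.r η) (p' : E.σ z' = ℋ.r η') : E.ract z η p = E.ract z' η' p' := by
  subst hz hη; rfl

theorem s_ρ (z : Z) : 𝒢.s (E.ρ z) = E.ρ z := by rw [← E.ρ_unit z, 𝒢.s_r]

theorem s_σ (z : Z) : ℋ.s (E.σ z) = E.σ z := by rw [← E.σ_unit z, ℋ.s_r]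

theorem lact_inv_lact (γ : G) (z : Z) (p : 𝒢.s γ = E.ρ z)
    (p' : 𝒢.s (𝒢.inv γ) = E.ρ (E.lact γ z p)) : E.lact (𝒢.inv γ) (E.lact γ z p) p' = z :=
  calc _ = E.lact (𝒢.mul (𝒢.inv γ) γ (𝒢.s_inv γ)) z (by rw [𝒢.s_mul, p]) :=
        (E.lact_mul _ _ _ _ _ _ _).symm
    _ = E.lact (E.ρ z) z (E.s_ρ z) := E.lact_congr (by rw [𝒢.inv_mul, p]) rfl _ _
    _ = z := E.lact_unit z _

theorem lact_lact_inv (γ : G) (z : Z) (p : 𝒢.s (𝒢.inv γ) = E.ρ z)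
    (p' : 𝒢.s γ = E.ρ (E.lact (𝒢.inv γ) z p)) : E.lact γ (E.lact (𝒢.inv γ) z p) p' = z :=
  (E.lact_congr (𝒢.inv_inv γ).symm rfl _ (by rw [𝒢.inv_inv]; exact p')).trans
    (E.lact_inv_lact _ _ _ _)

theorem ract_ract_inv (z : Z) (η : H) (p : E.σ z = ℋ.r η)
    (p' : E.σ (E.ract z η p) = ℋ.r (ℋ.inv η)) : E.ract (E.ract z η p) (ℋ.inv η) p' = z :=
  calc _ = E.ract z (ℋ.mul η (ℋ.inv η) (ℋ.r_inv η).symm) (by rw [ℋ.r_mul, p]) :=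
        (E.ract_mul _ _ _ _ _ _ _).symm
    _ = E.ract z (E.σ z) (E.σ_unit z).symm := E.ract_congr rfl (by rw [ℋ.mul_inv, p]) _ _
    _ = z := E.ract_unit z _

theorem ract_inv_ract (z : Z) (η : H) (p : E.σ z = ℋ.r (ℋ.inv η))
    (p' : E.σ (E.ract z (ℋ.inv η) p) = ℋ.r η) : E.ract (E.ract z (ℋ.inv η) p) η p' = z :=
  (E.ract_congr rfl (ℋ.inv_inv η).symm _ (by rw [ℋ.inv_inv]; exact p')).trans
    (E.ract_ract_inv _ _ _ _)

theorem lact_inj {γ : G} {y z : Z} (p : 𝒢.s γ = E.ρ y) (p' : 𝒢.s γ = E.ρ z)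
    (he : E.lact γ y p = E.lact γ z p') : y = z := by
  rw [← E.lact_inv_lact γ y p (by rw [𝒢.s_inv, E.ρ_lact]),
    ← E.lact_inv_lact γ z p' (by rw [𝒢.s_inv, E.ρ_lact])]
  exact E.lact_congr rfl he _ _

theorem lact_cancel {γ γ' : G} {z : Z} (p : 𝒢.s γ = E.ρ z) (p' : 𝒢.s γ' = E.ρ z)
    (he : E.lact γ z p = E.lact γ' z p') : γ = γ' := by
  have hr : 𝒢.r γ = 𝒢.r γ' := by rw [← E.ρ_lact γ z p, ← E.ρ_lact γ' z p', he]
  have hc : 𝒢.s (𝒢.inv γ') = 𝒢.r γ := by rw [𝒢.s_inv, hr]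
  have hfix : E.lact (𝒢.mul (𝒢.inv γ') γ hc) z (by rw [𝒢.s_mul, p]) = z :=
    calc _ = E.lact (𝒢.inv γ') (E.lact γ z p) (by rw [𝒢.s_inv, E.ρ_lact, hr]) :=
          E.lact_mul _ _ _ _ _ _ _
      _ = E.lact (𝒢.inv γ') (E.lact γ' z p') (by rw [𝒢.s_inv, E.ρ_lact]) :=
          E.lact_congr rfl he _ _
      _ = z := E.lact_inv_lact _ _ _ _
  -- by freeness, `γ'⁻¹γ` fixing `z` makes it the unit `ρ z`
  have hunit := E.lact_free _ _ _ hfix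
  exact (𝒢.eq_inv_of_mul_eq_r hc (by rw [hunit, 𝒢.r_inv, p'])).trans (𝒢.inv_inv γ')

theorem ract_cancel {η η' : H} {z : Z} (p : E.σ z = ℋ.r η) (p' : E.σ z = ℋ.r η')
    (he : E.ract z η p = E.ract z η' p') : η = η' := by
  have hs : ℋ.s η = ℋ.s η' := by rw [← E.σ_ract z η p, ← E.σ_ract z η' p', he]
  have hc : ℋ.s η = ℋ.r (ℋ.inv η') := by rw [ℋ.r_inv, hs]
  have hfix : E.ract z (ℋ.mul η (ℋ.inv η') hc) (by rw [ℋ.r_mul, p]) = z :=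
    calc _ = E.ract (E.ract z η p) (ℋ.inv η') (by rw [E.σ_ract, ℋ.r_inv, hs]) :=
          E.ract_mul _ _ _ _ _ _ _
      _ = E.ract (E.ract z η' p') (ℋ.inv η') (by rw [E.σ_ract, ℋ.r_inv]) :=
          E.ract_congr he rfl _ _
      _ = z := E.ract_ract_inv _ _ _ _
  have hunit := E.ract_free _ _ _ hfix
  exact ℋ.inv_injective (ℋ.eq_inv_of_mul_eq_r hc (by rw [hunit, p])).symm

theorem lact_inv_lact_inv {γ γ' : G} {z : Z} (h : 𝒢.s γ = 𝒢.r γ')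
    (p : 𝒢.s (𝒢.inv γ) = E.ρ z) (q : 𝒢.s (𝒢.inv γ') = E.ρ (E.lact (𝒢.inv γ) z p))
    (p' : 𝒢.s (𝒢.inv (𝒢.mul γ γ' h)) = E.ρ z) :
    E.lact (𝒢.inv γ') (E.lact (𝒢.inv γ) z p) q = E.lact (𝒢.inv (𝒢.mul γ γ' h)) z p' := by
  have hi : 𝒢.s (𝒢.inv γ') = 𝒢.r (𝒢.inv γ) := by rw [𝒢.s_inv, 𝒢.r_inv, h]
  rw [← E.lact_mul _ _ _ hi _ (by rw [𝒢.s_mul, p])]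
  exact E.lact_congr (𝒢.mul_inv_rev h hi).symm rfl _ _

theorem ract_inv_mul {η η' : H} {z : Z} (h : ℋ.s η = ℋ.r η')
    (p : E.σ z = ℋ.r (ℋ.inv (ℋ.mul η η' h))) (p' : E.σ z = ℋ.r (ℋ.inv η'))
    (q : E.σ (E.ract z (ℋ.inv η') p') = ℋ.r (ℋ.inv η)) :
    E.ract z (ℋ.inv (ℋ.mul η η' h)) p = E.ract (E.ract z (ℋ.inv η') p') (ℋ.inv η) q := by
  have hi : ℋ.s (ℋ.inv η') = ℋ.r (ℋ.inv η) := by rw [ℋ.s_inv, ℋ.r_inv, h]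
  rw [← E.ract_mul _ _ _ _ hi (by rw [ℋ.r_mul, p'])]
  exact E.ract_congr rfl (ℋ.mul_inv_rev h hi) _ _

theorem continuous_lact_inv :
    Continuous fun p : {p : Z × G // E.ρ p.1 = 𝒢.r p.2} =>
      E.lact (𝒢.inv p.1.2) p.1.1 ((𝒢.s_inv _).trans p.2.symm) :=
  E.lact_cont.comp <| ((𝒢.cont_inv.comp (continuous_snd.comp continuous_subtype_val)).prodMk
    (continuous_fst.comp continuous_subtype_val)).subtype_mk
    fun p => (𝒢.s_inv _).trans p.2.symm

theorem continuous_ract_inv :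
    Continuous fun p : {p : H × Z // ℋ.s p.1 = E.σ p.2} =>
      E.ract p.1.2 (ℋ.inv p.1.1) (p.2.symm.trans (ℋ.r_inv _).symm) :=
  E.ract_cont.comp <| ((continuous_snd.comp continuous_subtype_val).prodMk
    (ℋ.cont_inv.comp (continuous_fst.comp continuous_subtype_val))).subtype_mk
    fun p => p.2.symm.trans (ℋ.r_inv _).symm

theorem isEmbedding_lact_prod :
    IsEmbedding fun p : {p : G × Z // 𝒢.s p.1 = E.ρ p.2} => (E.lact p.1.1 p.1.2 p.2, p.1.2) := by
  refine (IsClosedEmbedding.of_continuous_injective_isClosedMap E.lact_proper.continuous ?_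
    E.lact_proper.isClosedMap).isEmbedding
  rintro ⟨⟨γ, z⟩, p⟩ ⟨⟨γ', z'⟩, p'⟩ he
  obtain ⟨he, rfl⟩ := Prod.ext_iff.1 he
  obtain rfl := E.lact_cancel p p' he
  rfl

theorem isEmbedding_ract_prod :
    IsEmbedding fun p : {p : Z × H // E.σ p.1 = ℋ.r p.2} => (E.ract p.1.1 p.1.2 p.2, p.1.1) := by
  refine (IsClosedEmbedding.of_continuous_injective_isClosedMap E.ract_proper.continuous ?_
    E.ract_proper.isClosedMap).isEmbedding
  rintro ⟨⟨z, η⟩, p⟩ ⟨⟨z', η'⟩, p'⟩ he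
  obtain ⟨he, rfl⟩ := Prod.ext_iff.1 he
  obtain rfl := E.ract_cancel p p' he
  rfl

/-- `gbr y z` is the bracket `_G[y,z]`. -/
def IsGBracket (gbr : (y z : Z) → E.σ y = E.σ z → G) : Prop :=
  ∀ y z (h : E.σ y = E.σ z), ∃ hc : 𝒢.s (gbr y z h) = E.ρ z,
    𝒢.r (gbr y z h) = E.ρ y ∧ E.lact (gbr y z h) z hc = y

/-- `hbr y z` is the bracket `[y,z]_H`. -/
def IsHBracket (hbr : (y z : Z) → E.ρ y = E.ρ z → H) : Prop :=
  ∀ y z (h : E.ρ y = E.ρ z), ∃ hc : E.σ y = ℋ.r (hbr y z h),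
    ℋ.s (hbr y z h) = E.σ z ∧ E.ract y (hbr y z h) hc = z

def linkR : G ⊕ Z ⊕ Z ⊕ H → G ⊕ Z ⊕ Z ⊕ H :=
  Sum.elim (fun γ => inG (𝒢.r γ)) <| Sum.elim (fun z => inG (E.ρ z)) <|
    Sum.elim (fun z => inH (E.σ z)) fun η => inH (ℋ.r η)

def linkS : G ⊕ Z ⊕ Z ⊕ H → G ⊕ Z ⊕ Z ⊕ H :=
  Sum.elim (fun γ => inG (𝒢.s γ)) <| Sum.elim (fun z => inH (E.σ z)) <|
    Sum.elim (fun z => inG (E.ρ z)) fun η => inH (ℋ.s η)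

variable (𝒢 ℋ) in
def linkInv : G ⊕ Z ⊕ Z ⊕ H → G ⊕ Z ⊕ Z ⊕ H :=
  Sum.elim (fun γ => inG (𝒢.inv γ)) <| Sum.elim inZo <| Sum.elim inZ fun η => inH (ℋ.inv η)

def linkMul (gbr : (y z : Z) → E.σ y = E.σ z → G) (hbr : (y z : Z) → E.ρ y = E.ρ z → H) :
    (x y : G ⊕ Z ⊕ Z ⊕ H) → E.linkS x = E.linkR y → G ⊕ Z ⊕ Z ⊕ H
  | .inl γ, .inl γ', h => inG (𝒢.mul γ γ' (inG_injective h))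
  | .inl γ, .inr (.inl z), h => inZ (E.lact γ z (inG_injective h))
  | .inr (.inl z), .inr (.inr (.inr η)), h => inZ (E.ract z η (inH_injective h))
  | .inr (.inl y), .inr (.inr (.inl z)), h => inG (gbr y z (inH_injective h))
  | .inr (.inr (.inl y)), .inr (.inl z), h => inH (hbr y z (inG_injective h))
  | .inr (.inr (.inl z)), .inl γ, h =>
      inZo (E.lact (𝒢.inv γ) z ((𝒢.s_inv γ).trans (inG_injective h).symm))
  | .inr (.inr (.inr η)), .inr (.inr (.inl z)), h =>
      inZo (E.ract z (ℋ.inv η) ((inH_injective h).symm.trans (ℋ.r_inv η).symm))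
  | .inr (.inr (.inr η)), .inr (.inr (.inr η')), h => inH (ℋ.mul η η' (inH_injective h))
  | .inl _, .inr (.inr (.inl _)), h => nomatch h
  | .inl _, .inr (.inr (.inr _)), h => nomatch h
  | .inr (.inl _), .inl _, h => nomatch h
  | .inr (.inl _), .inr (.inl _), h => nomatch h
  | .inr (.inr (.inl _)), .inr (.inr (.inl _)), h => nomatch h
  | .inr (.inr (.inl _)), .inr (.inr (.inr _)), h => nomatch h
  | .inr (.inr (.inr _)), .inl _, h => nomatch h
  | .inr (.inr (.inr _)), .inr (.inl _), h => nomatch h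

variable {E} {gbr : (y z : Z) → E.σ y = E.σ z → G} {hbr : (y z : Z) → E.ρ y = E.ρ z → H}

theorem IsGBracket.s_eq (hgbr : E.IsGBracket gbr) (y z : Z) (h : E.σ y = E.σ z) :
    𝒢.s (gbr y z h) = E.ρ z :=
  (hgbr y z h).1

theorem IsGBracket.r_eq (hgbr : E.IsGBracket gbr) (y z : Z) (h : E.σ y = E.σ z) :
    𝒢.r (gbr y z h) = E.ρ y :=
  (hgbr y z h).2.1

theorem IsGBracket.eq_of_lact_eq (hgbr : E.IsGBracket gbr) {γ : G} {y z : Z} {p : 𝒢.s γ = E.ρ z}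
    (q : E.σ y = E.σ z) (he : E.lact γ z p = y) : gbr y z q = γ := by
  obtain ⟨hc, -, hl⟩ := hgbr y z q
  exact E.lact_cancel hc p (hl.trans he.symm)

theorem IsGBracket.self_eq (hgbr : E.IsGBracket gbr) (z : Z) (q : E.σ z = E.σ z) :
    gbr z z q = E.ρ z :=
  hgbr.eq_of_lact_eq q (E.lact_unit z (E.s_ρ z))

theorem IsGBracket.continuous (hgbr : E.IsGBracket gbr) :
    Continuous fun p : {p : Z × Z // E.σ p.1 = E.σ p.2} => gbr p.1.1 p.1.2 p.2 := by
  refine E.isEmbedding_lact_prod.continuous_of_eq_comp continuous_subtype_val ?_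
    (continuous_fst.comp continuous_subtype_val) ?_
  · rintro ⟨⟨y, z⟩, q⟩
    obtain ⟨γ, p, hl⟩ := E.σ_orbit y z q
    exact ⟨⟨(γ, z), p⟩, Prod.ext hl rfl⟩
  · rintro ⟨⟨γ, z⟩, p⟩ ⟨⟨y, z'⟩, q⟩ he
    obtain ⟨hl, rfl⟩ := Prod.ext_iff.1 he
    exact hgbr.eq_of_lact_eq q hl

theorem IsHBracket.r_eq (hhbr : E.IsHBracket hbr) (y z : Z) (h : E.ρ y = E.ρ z) :
    ℋ.r (hbr y z h) = E.σ y :=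
  (hhbr y z h).1.symm

theorem IsHBracket.s_eq (hhbr : E.IsHBracket hbr) (y z : Z) (h : E.ρ y = E.ρ z) :
    ℋ.s (hbr y z h) = E.σ z :=
  (hhbr y z h).2.1

theorem IsHBracket.eq_of_ract_eq (hhbr : E.IsHBracket hbr) {η : H} {y z : Z} {p : E.σ y = ℋ.r η}
    (q : E.ρ y = E.ρ z) (he : E.ract y η p = z) : hbr y z q = η := by
  obtain ⟨hc, -, hr⟩ := hhbr y z q
  exact E.ract_cancel hc p (hr.trans he.symm)

theorem IsHBracket.self_eq (hhbr : E.IsHBracket hbr) (z : Z) (q : E.ρ z = E.ρ z) :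
    hbr z z q = E.σ z :=
  hhbr.eq_of_ract_eq q (E.ract_unit z (E.σ_unit z).symm)

theorem IsHBracket.continuous (hhbr : E.IsHBracket hbr) :
    Continuous fun p : {p : Z × Z // E.ρ p.1 = E.ρ p.2} => hbr p.1.1 p.1.2 p.2 := by
  refine E.isEmbedding_ract_prod.continuous_of_eq_comp (j := fun p => (p.1.2, p.1.1))
    (by fun_prop) ?_ (continuous_snd.comp continuous_subtype_val) ?_
  · rintro ⟨⟨y, z⟩, q⟩
    obtain ⟨η, p, hr⟩ := E.ρ_orbit z y q.symm
    exact ⟨⟨(y, η), p⟩, Prod.ext hr rfl⟩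
  · rintro ⟨⟨z', η⟩, p⟩ ⟨⟨y, z⟩, q⟩ he
    obtain ⟨hr, rfl⟩ := Prod.ext_iff.1 he
    exact hhbr.eq_of_ract_eq q hr

theorem IsGBracket.apply_lact (hgbr : E.IsGBracket gbr) {γ : G} {y z : Z}
    (p : 𝒢.s γ = E.ρ y) (q : E.σ y = E.σ z) (h : 𝒢.s γ = 𝒢.r (gbr y z q))
    (q' : E.σ (E.lact γ y p) = E.σ z) :
    gbr (E.lact γ y p) z q' = 𝒢.mul γ (gbr y z q) h := by
  obtain ⟨hc, -, hl⟩ := hgbr y z q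
  refine hgbr.eq_of_lact_eq (p := by rw [𝒢.s_mul, hc]) q' ?_
  calc _ = E.lact γ (E.lact (gbr y z q) z hc) (by rw [E.ρ_lact, h]) := E.lact_mul _ _ _ _ _ _ _
    _ = E.lact γ y p := E.lact_congr rfl hl _ _

theorem IsGBracket.apply_lact_inv (hgbr : E.IsGBracket gbr) {γ : G} {y z : Z}
    (q : E.σ y = E.σ z) (p : 𝒢.s (𝒢.inv γ) = E.ρ z) (h : 𝒢.s (gbr y z q) = 𝒢.r γ)
    (q' : E.σ y = E.σ (E.lact (𝒢.inv γ) z p)) :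
    gbr y (E.lact (𝒢.inv γ) z p) q' = 𝒢.mul (gbr y z q) γ h := by
  obtain ⟨hc, -, hl⟩ := hgbr y z q
  refine hgbr.eq_of_lact_eq (p := by rw [𝒢.s_mul, E.ρ_lact, 𝒢.r_inv]) q' ?_
  calc _ = E.lact (gbr y z q) (E.lact γ (E.lact (𝒢.inv γ) z p) (by rw [E.ρ_lact, 𝒢.r_inv]))
          (by rw [E.ρ_lact, h]) := E.lact_mul _ _ _ _ _ _ _
    _ = E.lact (gbr y z q) z hc := E.lact_congr rfl (E.lact_lact_inv _ _ _ _) _ _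
    _ = y := hl

theorem IsGBracket.apply_ract (hgbr : E.IsGBracket gbr) {η : H} {z w : Z}
    (p : E.σ z = ℋ.r η) (p' : E.σ w = ℋ.r (ℋ.inv η))
    (q : E.σ (E.ract z η p) = E.σ w) (q' : E.σ z = E.σ (E.ract w (ℋ.inv η) p')) :
    gbr (E.ract z η p) w q = gbr z (E.ract w (ℋ.inv η) p') q' := by
  obtain ⟨hc, -, hl⟩ := hgbr z (E.ract w (ℋ.inv η) p') q'
  have p'' : E.σ (E.ract w (ℋ.inv η) p') = ℋ.r η := by rw [E.σ_ract, ℋ.s_inv]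
  refine hgbr.eq_of_lact_eq (p := hc.trans (E.ρ_ract _ _ _)) q ?_
  calc _ = E.lact (gbr z (E.ract w (ℋ.inv η) p') q') (E.ract (E.ract w (ℋ.inv η) p') η p'')
          (by rw [E.ρ_ract]; exact hc) := E.lact_congr rfl (E.ract_inv_ract w η p' p'').symm _ _
    _ = E.ract (E.lact (gbr z (E.ract w (ℋ.inv η) p') q') (E.ract w (ℋ.inv η) p') hc) η
          (by rw [E.σ_lact]; exact p'') := (E.act_comm _ _ _ _ _ _ _).symm
    _ = E.ract z η p := E.ract_congr hl rfl _ _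

theorem IsHBracket.apply_lact (hhbr : E.IsHBracket hbr) {γ : G} {z w : Z}
    (p : 𝒢.s (𝒢.inv γ) = E.ρ z) (p' : 𝒢.s γ = E.ρ w)
    (q : E.ρ (E.lact (𝒢.inv γ) z p) = E.ρ w) (q' : E.ρ z = E.ρ (E.lact γ w p')) :
    hbr (E.lact (𝒢.inv γ) z p) w q = hbr z (E.lact γ w p') q' := by
  obtain ⟨hc, -, hr⟩ := hhbr z (E.lact γ w p') q'
  refine hhbr.eq_of_ract_eq (p := by rw [E.σ_lact]; exact hc) q ?_
  calc _ = E.lact (𝒢.inv γ) (E.ract z (hbr z (E.lact γ w p') q') hc)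
          (by rw [E.ρ_ract]; exact p) := E.act_comm _ _ _ _ _ _ _
    _ = E.lact (𝒢.inv γ) (E.lact γ w p') (by rw [𝒢.s_inv, E.ρ_lact]) :=
        E.lact_congr rfl hr _ _
    _ = w := E.lact_inv_lact _ _ _ _

theorem IsHBracket.apply_ract (hhbr : E.IsHBracket hbr) {η : H} {y z : Z}
    (q : E.ρ y = E.ρ z) (p : E.σ z = ℋ.r η) (h : ℋ.s (hbr y z q) = ℋ.r η)
    (q' : E.ρ y = E.ρ (E.ract z η p)) :
    hbr y (E.ract z η p) q' = ℋ.mul (hbr y z q) η h := by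
  obtain ⟨hc, -, hr⟩ := hhbr y z q
  refine hhbr.eq_of_ract_eq (p := by rw [ℋ.r_mul]; exact hc) q' ?_
  calc _ = E.ract (E.ract y (hbr y z q) hc) η (by rw [E.σ_ract, h]) := E.ract_mul _ _ _ _ _ _ _
    _ = E.ract z η p := E.ract_congr hr rfl _ _

theorem IsHBracket.apply_ract_inv (hhbr : E.IsHBracket hbr) {η : H} {z w : Z}
    (p : E.σ z = ℋ.r (ℋ.inv η)) (q : E.ρ z = E.ρ w) (h : ℋ.s η = ℋ.r (hbr z w q))
    (q' : E.ρ (E.ract z (ℋ.inv η) p) = E.ρ w) :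
    hbr (E.ract z (ℋ.inv η) p) w q' = ℋ.mul η (hbr z w q) h := by
  obtain ⟨hc, -, hr⟩ := hhbr z w q
  have hi : ℋ.s (ℋ.inv η) = ℋ.r (ℋ.mul η (hbr z w q) h) := by rw [ℋ.s_inv, ℋ.r_mul]
  have hcancel : ℋ.mul (ℋ.inv η) (ℋ.mul η (hbr z w q) h) hi = hbr z w q :=
    calc _ = ℋ.mul (ℋ.mul (ℋ.inv η) η (ℋ.s_inv η)) (hbr z w q) (by rw [ℋ.s_mul, h]) :=
          (ℋ.mul_assoc _ _ _ _ _ _ _).symm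
      _ = ℋ.mul (ℋ.r (hbr z w q)) (hbr z w q) (ℋ.s_r _) :=
          ℋ.mul_congr (by rw [ℋ.inv_mul, h]) rfl _ _
      _ = hbr z w q := ℋ.unit_mul _ _
  refine hhbr.eq_of_ract_eq (p := by rw [E.σ_ract, ℋ.s_inv, ℋ.r_mul]) q' ?_
  calc _ = E.ract z (ℋ.mul (ℋ.inv η) (ℋ.mul η (hbr z w q) h) hi) (by rw [ℋ.r_mul]; exact p) :=
        (E.ract_mul _ _ _ _ _ _ _).symm
    _ = E.ract z (hbr z w q) hc := E.ract_congr rfl hcancel _ _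
    _ = w := hr

theorem lact_gbr_eq_ract_hbr (hgbr : E.IsGBracket gbr) (hhbr : E.IsHBracket hbr) {y z w : Z}
    (q : E.σ y = E.σ z) (q' : E.ρ z = E.ρ w) (p : 𝒢.s (gbr y z q) = E.ρ w)
    (p' : E.σ y = ℋ.r (hbr z w q')) :
    E.lact (gbr y z q) w p = E.ract y (hbr z w q') p' := by
  obtain ⟨hc, -, hl⟩ := hgbr y z q
  obtain ⟨kc, -, kr⟩ := hhbr z w q'
  calc _ = E.lact (gbr y z q) (E.ract z (hbr z w q') kc) (by rw [E.ρ_ract]; exact hc) :=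
        E.lact_congr rfl kr.symm _ _
    _ = E.ract (E.lact (gbr y z q) z hc) (hbr z w q') (by rw [E.σ_lact]; exact kc) :=
        (E.act_comm _ _ _ _ _ _ _).symm
    _ = E.ract y (hbr z w q') p' := E.ract_congr hl rfl _ _

theorem ract_inv_hbr_eq_lact_inv_gbr (hgbr : E.IsGBracket gbr) (hhbr : E.IsHBracket hbr)
    {y z w : Z} (q : E.ρ y = E.ρ z) (q' : E.σ z = E.σ w)
    (p : E.σ w = ℋ.r (ℋ.inv (hbr y z q))) (p' : 𝒢.s (𝒢.inv (gbr z w q')) = E.ρ y) :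
    E.ract w (ℋ.inv (hbr y z q)) p = E.lact (𝒢.inv (gbr z w q')) y p' := by
  obtain ⟨kc, -, kr⟩ := hhbr y z q
  obtain ⟨hc, -, hl⟩ := hgbr z w q'
  refine E.lact_inj (γ := gbr z w q') (by rw [E.ρ_ract]; exact hc)
    (by rw [E.ρ_lact, 𝒢.r_inv]) ?_
  calc _ = E.ract (E.lact (gbr z w q') w hc) (ℋ.inv (hbr y z q)) (by rw [E.σ_lact]; exact p) :=
        (E.act_comm _ _ _ _ _ _ _).symm
    _ = E.ract (E.ract y (hbr y z q) kc) (ℋ.inv (hbr y z q)) (by rw [E.σ_ract, ℋ.r_inv]) :=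
        E.ract_congr (hl.trans kr.symm) rfl _ _
    _ = y := E.ract_ract_inv _ _ _ _
    _ = _ := (E.lact_lact_inv _ _ _ _).symm

theorem linkR_linkMul (hgbr : E.IsGBracket gbr) (hhbr : E.IsHBracket hbr)
    (x y : G ⊕ Z ⊕ Z ⊕ H) (h : E.linkS x = E.linkR y) :
    E.linkR (E.linkMul gbr hbr x y h) = E.linkR x := by
  rcases x with γ|z|z|η <;> rcases y with γ'|w|w|η' <;> try contradiction
  · exact congrArg inG (𝒢.r_mul _ _ _)
  · exact congrArg inG (E.ρ_lact _ _ _)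
  · exact congrArg inG (hgbr.r_eq _ _ _)
  · exact congrArg inG (E.ρ_ract _ _ _)
  · exact congrArg inH (E.σ_lact _ _ _)
  · exact congrArg inH (hhbr.r_eq _ _ _)
  · exact congrArg inH ((E.σ_ract _ _ _).trans (ℋ.s_inv _))
  · exact congrArg inH (ℋ.r_mul _ _ _)

theorem linkS_linkMul (hgbr : E.IsGBracket gbr) (hhbr : E.IsHBracket hbr)
    (x y : G ⊕ Z ⊕ Z ⊕ H) (h : E.linkS x = E.linkR y) :
    E.linkS (E.linkMul gbr hbr x y h) = E.linkS y := by
  rcases x with γ|z|z|η <;> rcases y with γ'|w|w|η' <;> try contradiction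
  · exact congrArg inG (𝒢.s_mul _ _ _)
  · exact congrArg inH (E.σ_lact _ _ _)
  · exact congrArg inG (hgbr.s_eq _ _ _)
  · exact congrArg inH (E.σ_ract _ _ _)
  · exact congrArg inG ((E.ρ_lact _ _ _).trans (𝒢.r_inv _))
  · exact congrArg inH (hhbr.s_eq _ _ _)
  · exact congrArg inG (E.ρ_ract _ _ _)
  · exact congrArg inH (ℋ.s_mul _ _ _)

theorem linkMul_unit_left (x : G ⊕ Z ⊕ Z ⊕ H) (h : E.linkS (E.linkR x) = E.linkR x) :
    E.linkMul gbr hbr (E.linkR x) x h = x := by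
  rcases x with γ|z|z|η
  · exact congrArg inG (𝒢.unit_mul γ _)
  · exact congrArg inZ (E.lact_unit z _)
  · exact congrArg inZo ((E.ract_congr rfl (ℋ.inv_eq_self (E.σ_unit z)) _
      (E.σ_unit z).symm).trans (E.ract_unit z _))
  · exact congrArg inH (ℋ.unit_mul η _)

theorem linkMul_unit_right (x : G ⊕ Z ⊕ Z ⊕ H) (h : E.linkS x = E.linkR (E.linkS x)) :
    E.linkMul gbr hbr x (E.linkS x) h = x := by
  rcases x with γ|z|z|η
  · exact congrArg inG (𝒢.mul_unit γ _)
  · exact congrArg inZ (E.ract_unit z _)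
  · exact congrArg inZo ((E.lact_congr (𝒢.inv_eq_self (E.ρ_unit z)) rfl _
      (E.s_ρ z)).trans (E.lact_unit z _))
  · exact congrArg inH (ℋ.mul_unit η _)

theorem linkMul_inv_left (hgbr : E.IsGBracket gbr) (hhbr : E.IsHBracket hbr)
    (x : G ⊕ Z ⊕ Z ⊕ H) (h : E.linkS (linkInv 𝒢 ℋ x) = E.linkR x) :
    E.linkMul gbr hbr (linkInv 𝒢 ℋ x) x h = E.linkS x := by
  rcases x with γ|z|z|η
  · exact congrArg inG (𝒢.inv_mul γ _)
  · exact congrArg inH (hhbr.self_eq z _)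
  · exact congrArg inG (hgbr.self_eq z _)
  · exact congrArg inH (ℋ.inv_mul η _)

theorem linkMul_inv_right (hgbr : E.IsGBracket gbr) (hhbr : E.IsHBracket hbr)
    (x : G ⊕ Z ⊕ Z ⊕ H) (h : E.linkS x = E.linkR (linkInv 𝒢 ℋ x)) :
    E.linkMul gbr hbr x (linkInv 𝒢 ℋ x) h = E.linkR x := by
  rcases x with γ|z|z|η
  · exact congrArg inG (𝒢.mul_inv γ _)
  · exact congrArg inG (hgbr.self_eq z _)
  · exact congrArg inH (hhbr.self_eq z _)
  · exact congrArg inH (ℋ.mul_inv η _)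

theorem linkMul_assoc (hgbr : E.IsGBracket gbr) (hhbr : E.IsHBracket hbr)
    (x y z : G ⊕ Z ⊕ Z ⊕ H) (h₁ : E.linkS x = E.linkR y) (h₂ : E.linkS y = E.linkR z)
    (h₃ : E.linkS (E.linkMul gbr hbr x y h₁) = E.linkR z)
    (h₄ : E.linkS x = E.linkR (E.linkMul gbr hbr y z h₂)) :
    E.linkMul gbr hbr (E.linkMul gbr hbr x y h₁) z h₃ =
      E.linkMul gbr hbr x (E.linkMul gbr hbr y z h₂) h₄ := by
  rcases x with γ|z₁|z₁|η <;> rcases y with γ'|z₂|z₂|η' <;> rcases z with γ''|z₃|z₃|η'' <;>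
    try contradiction
  -- the sixteen composable triples, in lexicographic order of the pieces `G, Z, Z^op, H`
  · exact congrArg inG (𝒢.mul_assoc _ _ _ _ _ _ _)
  · exact congrArg inZ (E.lact_mul _ _ _ _ _ _ _)
  · exact congrArg inG (hgbr.apply_lact _ _ _ _)
  · exact congrArg inZ (E.act_comm _ _ _ _ _ _ _)
  · exact congrArg inG (hgbr.apply_lact_inv _ _ _ _).symm
  · exact congrArg inZ (lact_gbr_eq_ract_hbr hgbr hhbr _ _ _ _)
  · exact congrArg inG (hgbr.apply_ract _ _ _ _)
  · exact congrArg inZ (E.ract_mul _ _ _ _ _ _ _).symm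
  · exact congrArg inZo (E.lact_inv_lact_inv _ _ _ _)
  · exact congrArg inH (hhbr.apply_lact _ _ _ _)
  · exact congrArg inZo (ract_inv_hbr_eq_lact_inv_gbr hgbr hhbr _ _ _ _)
  · exact congrArg inH (hhbr.apply_ract _ _ _ _).symm
  · exact congrArg inZo (E.act_comm _ _ _ _ _ _ _).symm
  · exact congrArg inH (hhbr.apply_ract_inv _ _ _ _)
  · exact congrArg inZo (E.ract_inv_mul _ _ _ _)
  · exact congrArg inH (ℋ.mul_assoc _ _ _ _ _ _ _)

theorem continuous_linkMul (hgbr : E.IsGBracket gbr) (hhbr : E.IsHBracket hbr) :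
    Continuous fun p : {p : (G ⊕ Z ⊕ Z ⊕ H) × (G ⊕ Z ⊕ Z ⊕ H) // E.linkS p.1 = E.linkR p.2} =>
      E.linkMul gbr hbr p.1.1 p.1.2 p.2 := by
  rw [continuous_iff_continuousAt]
  rintro ⟨⟨x, y⟩, h⟩
  rcases x with γ|z|z|η <;> rcases y with γ'|w|w|η' <;> try contradiction
  · exact continuousAt_of_isOpenEmbedding_prod isOpenEmbedding_inG isOpenEmbedding_inG
      (isOpenEmbedding_inG.continuous.comp 𝒢.cont_mul) (fun _ _ h => inG_injective h)
      (fun _ _ _ => rfl) γ γ' h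
  · exact continuousAt_of_isOpenEmbedding_prod isOpenEmbedding_inG isOpenEmbedding_inZ
      (isOpenEmbedding_inZ.continuous.comp E.lact_cont) (fun _ _ h => inG_injective h)
      (fun _ _ _ => rfl) γ w h
  · exact continuousAt_of_isOpenEmbedding_prod isOpenEmbedding_inZ isOpenEmbedding_inZo
      (isOpenEmbedding_inG.continuous.comp hgbr.continuous) (fun _ _ h => inH_injective h)
      (fun _ _ _ => rfl) z w h
  · exact continuousAt_of_isOpenEmbedding_prod isOpenEmbedding_inZ isOpenEmbedding_inH
      (isOpenEmbedding_inZ.continuous.comp E.ract_cont) (fun _ _ h => inH_injective h)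
      (fun _ _ _ => rfl) z η' h
  · exact continuousAt_of_isOpenEmbedding_prod isOpenEmbedding_inZo isOpenEmbedding_inG
      (isOpenEmbedding_inZo.continuous.comp E.continuous_lact_inv) (fun _ _ h => inG_injective h)
      (fun _ _ _ => rfl) z γ' h
  · exact continuousAt_of_isOpenEmbedding_prod isOpenEmbedding_inZo isOpenEmbedding_inZ
      (isOpenEmbedding_inH.continuous.comp hhbr.continuous) (fun _ _ h => inG_injective h)
      (fun _ _ _ => rfl) z w h
  · exact continuousAt_of_isOpenEmbedding_prod isOpenEmbedding_inH isOpenEmbedding_inZo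
      (isOpenEmbedding_inZo.continuous.comp E.continuous_ract_inv) (fun _ _ h => inH_injective h)
      (fun _ _ _ => rfl) η w h
  · exact continuousAt_of_isOpenEmbedding_prod isOpenEmbedding_inH isOpenEmbedding_inH
      (isOpenEmbedding_inH.continuous.comp ℋ.cont_mul) (fun _ _ h => inH_injective h)
      (fun _ _ _ => rfl) η η' h

variable (E) in
def linkingGpd (hgbr : E.IsGBracket gbr) (hhbr : E.IsHBracket hbr) :
    TopGpd (G ⊕ Z ⊕ Z ⊕ H) where
  r := E.linkR
  s := E.linkS
  mul := E.linkMul gbr hbr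
  inv := linkInv 𝒢 ℋ
  r_r
    | .inl γ => congrArg inG (𝒢.r_r γ)
    | .inr (.inl z) => congrArg inG (E.ρ_unit z)
    | .inr (.inr (.inl z)) => congrArg inH (E.σ_unit z)
    | .inr (.inr (.inr η)) => congrArg inH (ℋ.r_r η)
  s_r
    | .inl γ => congrArg inG (𝒢.s_r γ)
    | .inr (.inl z) => congrArg inG (E.s_ρ z)
    | .inr (.inr (.inl z)) => congrArg inH (E.s_σ z)
    | .inr (.inr (.inr η)) => congrArg inH (ℋ.s_r η)
  r_s
    | .inl γ => congrArg inG (𝒢.r_s γ)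
    | .inr (.inl z) => congrArg inH (E.σ_unit z)
    | .inr (.inr (.inl z)) => congrArg inG (E.ρ_unit z)
    | .inr (.inr (.inr η)) => congrArg inH (ℋ.r_s η)
  s_s
    | .inl γ => congrArg inG (𝒢.s_s γ)
    | .inr (.inl z) => congrArg inH (E.s_σ z)
    | .inr (.inr (.inl z)) => congrArg inG (E.s_ρ z)
    | .inr (.inr (.inr η)) => congrArg inH (ℋ.s_s η)
  r_mul := linkR_linkMul hgbr hhbr
  s_mul := linkS_linkMul hgbr hhbr
  unit_mul := linkMul_unit_left
  mul_unit := linkMul_unit_right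
  mul_assoc := linkMul_assoc hgbr hhbr
  r_inv
    | .inl γ => congrArg inG (𝒢.r_inv γ)
    | .inr (.inl _) | .inr (.inr (.inl _)) => rfl
    | .inr (.inr (.inr η)) => congrArg inH (ℋ.r_inv η)
  s_inv
    | .inl γ => congrArg inG (𝒢.s_inv γ)
    | .inr (.inl _) | .inr (.inr (.inl _)) => rfl
    | .inr (.inr (.inr η)) => congrArg inH (ℋ.s_inv η)
  inv_mul := linkMul_inv_left hgbr hhbr
  mul_inv := linkMul_inv_right hgbr hhbr
  cont_r := (isOpenEmbedding_inG.continuous.comp 𝒢.cont_r).sumElim <|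
    (isOpenEmbedding_inG.continuous.comp E.ρ_cont).sumElim <|
    (isOpenEmbedding_inH.continuous.comp E.σ_cont).sumElim
    (isOpenEmbedding_inH.continuous.comp ℋ.cont_r)
  cont_s := (isOpenEmbedding_inG.continuous.comp 𝒢.cont_s).sumElim <|
    (isOpenEmbedding_inH.continuous.comp E.σ_cont).sumElim <|
    (isOpenEmbedding_inG.continuous.comp E.ρ_cont).sumElim
    (isOpenEmbedding_inH.continuous.comp ℋ.cont_s)
  cont_inv := (isOpenEmbedding_inG.continuous.comp 𝒢.cont_inv).sumElim <|
    isOpenEmbedding_inZo.continuous.sumElim <| isOpenEmbedding_inZ.continuous.sumElim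
    (isOpenEmbedding_inH.continuous.comp ℋ.cont_inv)
  cont_mul := continuous_linkMul hgbr hhbr

end GpdEquiv

theorem linking_is_groupoid_general {G H Z : Type*}
    [TopologicalSpace G] [TopologicalSpace H] [TopologicalSpace Z]
    (𝒢 : TopGpd G) (ℋ : TopGpd H) (E : GpdEquiv 𝒢 ℋ Z)
    (gbr : (y z : Z) → E.σ y = E.σ z → G)
    (hgbr : ∀ y z (h : E.σ y = E.σ z), ∃ hc : 𝒢.s (gbr y z h) = E.ρ z,
      𝒢.r (gbr y z h) = E.ρ y ∧ E.lact (gbr y z h) z hc = y)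
    (hbr : (y z : Z) → E.ρ y = E.ρ z → H)
    (hhbr : ∀ y z (h : E.ρ y = E.ρ z), ∃ hc : E.σ y = ℋ.r (hbr y z h),
      ℋ.s (hbr y z h) = E.σ z ∧ E.ract y (hbr y z h) hc = z) :
    ∃ 𝓛 : TopGpd (G ⊕ Z ⊕ Z ⊕ H),
      -- range map
      (∀ γ : G, 𝓛.r (inG γ) = inG (𝒢.r γ)) ∧
      (∀ z : Z, 𝓛.r (inZ z) = (inG (E.ρ z) : G ⊕ Z ⊕ Z ⊕ H)) ∧
      (∀ z : Z, 𝓛.r (inZo z) = (inH (E.σ z) : G ⊕ Z ⊕ Z ⊕ H)) ∧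
      (∀ η : H, 𝓛.r (inH η) = (inH (ℋ.r η) : G ⊕ Z ⊕ Z ⊕ H)) ∧
      -- source map
      (∀ γ : G, 𝓛.s (inG γ) = inG (𝒢.s γ)) ∧
      (∀ z : Z, 𝓛.s (inZ z) = (inH (E.σ z) : G ⊕ Z ⊕ Z ⊕ H)) ∧
      (∀ z : Z, 𝓛.s (inZo z) = (inG (E.ρ z) : G ⊕ Z ⊕ Z ⊕ H)) ∧
      (∀ η : H, 𝓛.s (inH η) = (inH (ℋ.s η) : G ⊕ Z ⊕ Z ⊕ H)) ∧
      -- inversion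
      (∀ γ : G, 𝓛.inv (inG γ) = inG (𝒢.inv γ)) ∧
      (∀ z : Z, 𝓛.inv (inZ z) = inZo z) ∧
      (∀ z : Z, 𝓛.inv (inZo z) = inZ z) ∧
      (∀ η : H, 𝓛.inv (inH η) = (inH (ℋ.inv η) : G ⊕ Z ⊕ Z ⊕ H)) ∧
      -- multiplication: the eight composable cases
      (∀ γ γ' (hc : 𝒢.s γ = 𝒢.r γ') (h : 𝓛.s (inG γ) = 𝓛.r (inG γ')),
        𝓛.mul (inG γ) (inG γ') h = inG (𝒢.mul γ γ' hc)) ∧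
      (∀ γ z (hc : 𝒢.s γ = E.ρ z) (h : 𝓛.s (inG γ) = 𝓛.r (inZ z)),
        𝓛.mul (inG γ) (inZ z) h = inZ (E.lact γ z hc)) ∧
      (∀ z η (hc : E.σ z = ℋ.r η) (h : 𝓛.s (inZ z) = 𝓛.r (inH η)),
        𝓛.mul (inZ z) (inH η) h = inZ (E.ract z η hc)) ∧
      (∀ y z (hc : E.σ y = E.σ z) (h : 𝓛.s (inZ y) = 𝓛.r (inZo z)),
        𝓛.mul (inZ y) (inZo z) h = inG (gbr y z hc)) ∧
      (∀ y z (hc : E.ρ y = E.ρ z) (h : 𝓛.s (inZo y) = 𝓛.r (inZ z)),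
        𝓛.mul (inZo y) (inZ z) h = inH (hbr y z hc)) ∧
      (∀ z γ (hc : 𝒢.s (𝒢.inv γ) = E.ρ z) (h : 𝓛.s (inZo z) = 𝓛.r (inG γ)),
        𝓛.mul (inZo z) (inG γ) h = inZo (E.lact (𝒢.inv γ) z hc)) ∧
      (∀ η z (hc : E.σ z = ℋ.r (ℋ.inv η)) (h : 𝓛.s (inH η) = 𝓛.r (inZo z)),
        𝓛.mul (inH η) (inZo z) h = inZo (E.ract z (ℋ.inv η) hc)) ∧
      (∀ η η' (hc : ℋ.s η = ℋ.r η') (h : 𝓛.s (inH η) = 𝓛.r (inH η')),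
        𝓛.mul (inH η) (inH η') h = inH (ℋ.mul η η' hc)) := by
  refine ⟨E.linkingGpd hgbr hhbr, ?_⟩
  and_intros <;> intros <;> rfl

/-- the linking space `L = G ⊔ Z ⊔ Z^op ⊔ H` is a groupoid with the
indicated range, source, multiplication and inversion. -/
theorem linking_is_groupoid {G H Z : Type*}
    [TopologicalSpace G] [LocallyCompactSpace G] [T2Space G]
    [TopologicalSpace H] [LocallyCompactSpace H] [T2Space H]
    [TopologicalSpace Z] [LocallyCompactSpace Z] [T2Space Z]
    (𝒢 : TopGpd G) (ℋ : TopGpd H) (E : GpdEquiv 𝒢 ℋ Z)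
    (gbr : (y z : Z) → E.σ y = E.σ z → G)
    (hgbr : ∀ y z (h : E.σ y = E.σ z), ∃ hc : 𝒢.s (gbr y z h) = E.ρ z,
      𝒢.r (gbr y z h) = E.ρ y ∧ E.lact (gbr y z h) z hc = y)
    (hbr : (y z : Z) → E.ρ y = E.ρ z → H)
    (hhbr : ∀ y z (h : E.ρ y = E.ρ z), ∃ hc : E.σ y = ℋ.r (hbr y z h),
      ℋ.s (hbr y z h) = E.σ z ∧ E.ract y (hbr y z h) hc = z) :
    ∃ 𝓛 : TopGpd (G ⊕ Z ⊕ Z ⊕ H),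
      -- range map
      (∀ γ : G, 𝓛.r (inG γ) = inG (𝒢.r γ)) ∧
      (∀ z : Z, 𝓛.r (inZ z) = (inG (E.ρ z) : G ⊕ Z ⊕ Z ⊕ H)) ∧
      (∀ z : Z, 𝓛.r (inZo z) = (inH (E.σ z) : G ⊕ Z ⊕ Z ⊕ H)) ∧
      (∀ η : H, 𝓛.r (inH η) = (inH (ℋ.r η) : G ⊕ Z ⊕ Z ⊕ H)) ∧
      -- source map
      (∀ γ : G, 𝓛.s (inG γ) = inG (𝒢.s γ)) ∧
      (∀ z : Z, 𝓛.s (inZ z) = (inH (E.σ z) : G ⊕ Z ⊕ Z ⊕ H)) ∧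
      (∀ z : Z, 𝓛.s (inZo z) = (inG (E.ρ z) : G ⊕ Z ⊕ Z ⊕ H)) ∧
      (∀ η : H, 𝓛.s (inH η) = (inH (ℋ.s η) : G ⊕ Z ⊕ Z ⊕ H)) ∧
      -- inversion
      (∀ γ : G, 𝓛.inv (inG γ) = inG (𝒢.inv γ)) ∧
      (∀ z : Z, 𝓛.inv (inZ z) = inZo z) ∧
      (∀ z : Z, 𝓛.inv (inZo z) = inZ z) ∧
      (∀ η : H, 𝓛.inv (inH η) = (inH (ℋ.inv η) : G ⊕ Z ⊕ Z ⊕ H)) ∧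
      -- multiplication: the eight composable cases
      (∀ γ γ' (hc : 𝒢.s γ = 𝒢.r γ') (h : 𝓛.s (inG γ) = 𝓛.r (inG γ')),
        𝓛.mul (inG γ) (inG γ') h = inG (𝒢.mul γ γ' hc)) ∧
      (∀ γ z (hc : 𝒢.s γ = E.ρ z) (h : 𝓛.s (inG γ) = 𝓛.r (inZ z)),
        𝓛.mul (inG γ) (inZ z) h = inZ (E.lact γ z hc)) ∧
      (∀ z η (hc : E.σ z = ℋ.r η) (h : 𝓛.s (inZ z) = 𝓛.r (inH η)),
        𝓛.mul (inZ z) (inH η) h = inZ (E.ract z η hc)) ∧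
      (∀ y z (hc : E.σ y = E.σ z) (h : 𝓛.s (inZ y) = 𝓛.r (inZo z)),
        𝓛.mul (inZ y) (inZo z) h = inG (gbr y z hc)) ∧
      (∀ y z (hc : E.ρ y = E.ρ z) (h : 𝓛.s (inZo y) = 𝓛.r (inZ z)),
        𝓛.mul (inZo y) (inZ z) h = inH (hbr y z hc)) ∧
      (∀ z γ (hc : 𝒢.s (𝒢.inv γ) = E.ρ z) (h : 𝓛.s (inZo z) = 𝓛.r (inG γ)),
        𝓛.mul (inZo z) (inG γ) h = inZo (E.lact (𝒢.inv γ) z hc)) ∧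
      (∀ η z (hc : E.σ z = ℋ.r (ℋ.inv η)) (h : 𝓛.s (inH η) = 𝓛.r (inZo z)),
        𝓛.mul (inH η) (inZo z) h = inZo (E.ract z (ℋ.inv η) hc)) ∧
      (∀ η η' (hc : ℋ.s η = ℋ.r η') (h : 𝓛.s (inH η) = 𝓛.r (inH η')),
        𝓛.mul (inH η) (inH η') h = inH (ℋ.mul η η' hc)) :=
  linking_is_groupoid_general 𝒢 ℋ E gbr hgbr hbr hhbr
end

section
/- Let Z be a (G,H)-equivalence with Haar system {β^v} on H. For u ∈ G^(0) and any z ∈ Z with r(z) = u, the Radon measure σ_Z^u on Z defined by σ_Z^u(φ) = ∫_H φ(z·η) dβ^{s(z)}(η) is independent of the choice of z with r(z) = u. -/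
/-!
Any `z'` with `ρ z' = ρ z` is `z · η₀` for some `η₀ ∈ H` with `r η₀ = σ z`, and then
`φ (z' · η) = φ (z · (η₀ η))`, so left invariance of `β` under `η₀` turns the integral over
`H^{s η₀}` into the one over `H^{σ z}`. Left invariance is only available for functions in
`C_c(H)`, so `η ↦ φ (z · η)` is first extended from the closed fibre `H^{σ z}`: by Tietze, then
cut off by Urysohn, which is harmless because properness of the action makes it vanish off a
compact set.
-/

open MeasureTheory Topology

theorem exists_continuous_hasCompactSupport_extension {X : Type*} [TopologicalSpace X]
    [T2Space X] [LocallyCompactSpace X] [NormalSpace X]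
    {C K : Set X} (hC : IsClosed C) (hK : IsCompact K) {g : C → ℂ} (hg : Continuous g)
    (hgK : ∀ x : C, x.1 ∉ K → g x = 0) :
    ∃ f : X → ℂ, Continuous f ∧ HasCompactSupport f ∧ ∀ x : C, f x = g x := by
  obtain ⟨f₀, hf₀⟩ := ContinuousMap.exists_restrict_eq hC ⟨g, hg⟩
  obtain ⟨χ, hχK, -, hχs, -⟩ :=
    exists_continuous_one_zero_of_isCompact hK isClosed_empty (Set.disjoint_empty K)
  refine ⟨fun x => χ x • f₀ x, χ.continuous.smul f₀.continuous, hχs.smul_right, fun x => ?_⟩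
  have hf₀x : f₀ x = g x := ContinuousMap.congr_fun hf₀ x
  by_cases hx : x.1 ∈ K
  · simp [hχK hx, hf₀x]
  · simp [hf₀x, hgK x hx]

namespace GpdEquiv

variable {G H Z : Type*} [TopologicalSpace G] [TopologicalSpace H] [TopologicalSpace Z]
  {𝒢 : TopGpd G} {ℋ : TopGpd H} (E : GpdEquiv 𝒢 ℋ Z)

theorem continuous_ract_fiber (z : Z) :
    Continuous fun η : {η : H // ℋ.r η = E.σ z} => E.ract z η.1 η.2.symm :=
  E.ract_cont.comp <|
    (continuous_const.prodMk continuous_subtype_val).subtype_mk fun η => η.2.symm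

theorem isCompact_setOf_ract_mem (z : Z) {K : Set Z} (hK : IsCompact K) :
    IsCompact {η : H | ∃ h : E.σ z = ℋ.r η, E.ract z η h ∈ K} := by
  convert (E.ract_proper.isCompact_preimage (hK.prod isCompact_singleton)).image
    (continuous_snd.comp continuous_subtype_val) using 1
  ext η
  constructor
  · rintro ⟨h, hη⟩
    exact ⟨⟨(z, η), h⟩, ⟨hη, rfl⟩, rfl⟩
  · rintro ⟨⟨⟨z₁, η₁⟩, h⟩, ⟨hmem, hz₁⟩, rfl⟩
    obtain rfl : z₁ = z := hz₁
    exact ⟨h, hmem⟩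

theorem exists_extension_comp_ract [T2Space H] [LocallyCompactSpace H] [NormalSpace H]
    (z : Z) {φ : Z → ℂ} (hφc : Continuous φ) (hφs : HasCompactSupport φ) :
    ∃ f : H → ℂ, Continuous f ∧ HasCompactSupport f ∧
      ∀ η (h : E.σ z = ℋ.r η), f η = φ (E.ract z η h) := by
  obtain ⟨f, hfc, hfs, hf⟩ := exists_continuous_hasCompactSupport_extension
    (isClosed_eq ℋ.cont_r continuous_const) (E.isCompact_setOf_ract_mem z hφs)
    (hφc.comp (E.continuous_ract_fiber z))
    (fun η hη => by_contra fun hne => hη ⟨η.2.symm, subset_tsupport φ hne⟩)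
  exact ⟨f, hfc, hfs, fun η h => hf ⟨η, h.symm⟩⟩

end GpdEquiv

theorem sigmaZ_well_defined_general {G H Z : Type*}
    [TopologicalSpace G]
    [TopologicalSpace H] [LocallyCompactSpace H] [T2Space H] [SecondCountableTopology H]
    [MeasurableSpace H]
    [TopologicalSpace Z]
    (𝒢 : TopGpd G) (ℋ : TopGpd H) (E : GpdEquiv 𝒢 ℋ Z)
    -- the Haar system `{β^v}` on `H`
    (β : H → Measure H)
    -- each `β^v` is supported on `H^v = r⁻¹(v)`
    (hβsupp : ∀ v, ℋ.r v = v → β v {η | ℋ.r η ≠ v} = 0)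
    -- total version of multiplication on `H`, and left invariance of `β`
    (mH : H → H → H) (hmH : ∀ x y (h : ℋ.s x = ℋ.r y), mH x y = ℋ.mul x y h)
    (hβinv : ∀ η (f : H → ℂ), Continuous f → HasCompactSupport f →
      ∫ x, f (mH η x) ∂(β (ℋ.s η)) = ∫ x, f x ∂(β (ℋ.r η)))
    -- total version of the right `H`-action on `Z`
    (aR : Z → H → Z) (haR : ∀ z η (h : E.σ z = ℋ.r η), aR z η = E.ract z η h)
    -- conclusion: independence of the choice of `z` with `r(z) = u`
    (z z' : Z) (hzz' : E.ρ z = E.ρ z')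
    (φ : Z → ℂ) (hφc : Continuous φ) (hφs : HasCompactSupport φ) :
    ∫ η, φ (aR z η) ∂(β (E.σ z)) = ∫ η, φ (aR z' η) ∂(β (E.σ z')) := by
  obtain ⟨η₀, h₀, rfl⟩ := E.ρ_orbit z' z hzz'.symm
  obtain ⟨f, hfc, hfs, hf⟩ := E.exists_extension_comp_ract z hφc hφs
  have hβfiber : ∀ v, ℋ.r v = v → ∀ᵐ η ∂(β v), ℋ.r η = v :=
    fun v hv => ae_iff.mpr (hβsupp v hv)
  calc ∫ η, φ (aR z η) ∂(β (E.σ z))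
      = ∫ η, f η ∂(β (ℋ.r η₀)) := by
        rw [← h₀]
        refine integral_congr_ae ((hβfiber _ (E.σ_unit z)).mono fun η hη => ?_)
        dsimp only
        rw [haR z η hη.symm, hf]
    _ = ∫ η, f (mH η₀ η) ∂(β (ℋ.s η₀)) := (hβinv η₀ f hfc hfs).symm
    _ = ∫ η, φ (aR (E.ract z η₀ h₀) η) ∂(β (E.σ (E.ract z η₀ h₀))) := by
        rw [E.σ_ract]
        refine integral_congr_ae ((hβfiber _ (ℋ.r_s η₀)).mono fun η hη => ?_)
        have hr : E.σ z = ℋ.r (ℋ.mul η₀ η hη.symm) := by rw [ℋ.r_mul]; exact h₀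
        have hσ : E.σ (E.ract z η₀ h₀) = ℋ.r η := by rw [E.σ_ract]; exact hη.symm
        dsimp only
        rw [hmH η₀ η hη.symm, hf _ hr, haR _ η hσ, E.ract_mul z η₀ η h₀ hη.symm hr hσ]

/-- the measure `σ_Z^u`, `σ_Z^u(φ) = ∫_H φ(z·η) dβ^{s(z)}(η)` for any
`z` with `r(z) = u`, is independent of the choice of `z`. -/
theorem sigmaZ_well_defined {G H Z : Type*}
    [TopologicalSpace G] [LocallyCompactSpace G] [T2Space G] [SecondCountableTopology G]
    [TopologicalSpace H] [LocallyCompactSpace H] [T2Space H] [SecondCountableTopology H]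
    [MeasurableSpace H] [BorelSpace H]
    [TopologicalSpace Z] [LocallyCompactSpace Z] [T2Space Z] [SecondCountableTopology Z]
    (𝒢 : TopGpd G) (ℋ : TopGpd H) (E : GpdEquiv 𝒢 ℋ Z)
    -- the Haar system `{β^v}` on `H`
    (β : H → Measure H)
    (hβreg : ∀ v, (β v).Regular)
    -- each `β^v` is supported on `H^v = r⁻¹(v)`
    (hβsupp : ∀ v, ℋ.r v = v → β v {η | ℋ.r η ≠ v} = 0)
    -- total version of multiplication on `H`, and left invariance of `β`
    (mH : H → H → H) (hmH : ∀ x y (h : ℋ.s x = ℋ.r y), mH x y = ℋ.mul x y h)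
    (hβinv : ∀ η (f : H → ℂ), Continuous f → HasCompactSupport f →
      ∫ x, f (mH η x) ∂(β (ℋ.s η)) = ∫ x, f x ∂(β (ℋ.r η)))
    -- total version of the right `H`-action on `Z`
    (aR : Z → H → Z) (haR : ∀ z η (h : E.σ z = ℋ.r η), aR z η = E.ract z η h)
    -- conclusion: independence of the choice of `z` with `r(z) = u`
    (z z' : Z) (hzz' : E.ρ z = E.ρ z')
    (φ : Z → ℂ) (hφc : Continuous φ) (hφs : HasCompactSupport φ) :
    ∫ η, φ (aR z η) ∂(β (E.σ z)) = ∫ η, φ (aR z' η) ∂(β (E.σ z')) :=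
  sigmaZ_well_defined_general 𝒢 ℋ E β hβsupp mH hmH hβinv aR haR z z' hzz' φ hφc hφs
end

section
/- Let X be an A–B imprimitivity bimodule with Rieffel correspondence X-Ind on ideals, and let π be a representation of B with I ⊆ ker π for an ideal I ⊴ B. Then X-Ind(I) ⊆ ker(X-Ind π), where X-Ind π is the induced representation of A. In particular, if every representation factoring through B/I induces a representation factoring through A/X-Ind(I). -/
/-- An `A`–`B` imprimitivity bimodule: a complete complex normed space `X` which is a
left Hilbert `A`-module and a right Hilbert `B`-module with full inner products
satisfying the compatibility condition `⟨x,y⟩_A · z = x · ⟨y,z⟩_B`. -/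
structure ImprimitivityBimodule (A B X : Type*)
    [NonUnitalCStarAlgebra A] [NonUnitalCStarAlgebra B]
    [NormedAddCommGroup X] [Module ℂ X] [CompleteSpace X] where
  smulA : A → X → X
  smulB : X → B → X
  innerA : X → X → A
  innerB : X → X → B
  smulA_add : ∀ a x y, smulA a (x + y) = smulA a x + smulA a y
  add_smulA : ∀ a a' x, smulA (a + a') x = smulA a x + smulA a' x
  smulA_mul : ∀ a a' x, smulA (a * a') x = smulA a (smulA a' x)
  smulB_add : ∀ x y b, smulB (x + y) b = smulB x b + smulB y b
  add_smulB : ∀ x b b', smulB x (b + b') = smulB x b + smulB x b'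
  smulB_mul : ∀ x b b', smulB x (b * b') = smulB (smulB x b) b'
  smulAB_assoc : ∀ a x b, smulB (smulA a x) b = smulA a (smulB x b)
  innerA_add_left : ∀ x y z, innerA (x + y) z = innerA x z + innerA y z
  innerA_smulA_left : ∀ a x y, innerA (smulA a x) y = a * innerA x y
  innerA_star : ∀ x y, star (innerA x y) = innerA y x
  innerB_add_right : ∀ x y z, innerB x (y + z) = innerB x y + innerB x z
  innerB_smulB_right : ∀ x y b, innerB x (smulB y b) = innerB x y * b
  innerB_star : ∀ x y, star (innerB x y) = innerB y x
  innerA_pos : ∀ x, ∃ a : A, innerA x x = star a * a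
  innerB_pos : ∀ x, ∃ b : B, innerB x x = star b * b
  compat : ∀ x y z, smulA (innerA x y) z = smulB x (innerB y z)
  fullA : closure ↑(Submodule.span ℂ {a : A | ∃ x y, a = innerA x y}) = (Set.univ : Set A)
  fullB : closure ↑(Submodule.span ℂ {b : B | ∃ x y, b = innerB x y}) = (Set.univ : Set B)
  norm_eq_A : ∀ x, ‖x‖ ^ 2 = ‖innerA x x‖
  norm_eq_B : ∀ x, ‖x‖ ^ 2 = ‖innerB x x‖

/-!
For `i` in an ideal `I ⊆ ker π`, the vector `x · i ⊗ h` of `X ⊗_B 𝓗` has squared norm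
`⟨h, π ⟨x·i, x·i⟩_B h⟩ = ⟨h, π (i* ⟨x,x⟩_B i) h⟩ = 0`, so it vanishes. The generator
`⟨x·i, y⟩_A` of `X-Ind(I)` acts by `z ⊗ h ↦ x · (i ⟨y,z⟩_B) ⊗ h`, which is again of this form,
so it kills a densely spanning set and hence all of `X ⊗_B 𝓗`. Finally `ker (X-Ind π)` is a closed
subspace, so it contains the closed span `X-Ind(I)` of these generators.
-/

namespace ImprimitivityBimodule

variable {A B X : Type*} [NonUnitalCStarAlgebra A] [NonUnitalCStarAlgebra B]
  [NormedAddCommGroup X] [Module ℂ X] [CompleteSpace X] (M : ImprimitivityBimodule A B X)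

theorem innerB_smulB_left (x y : X) (b : B) :
    M.innerB (M.smulB x b) y = star b * M.innerB x y := by
  rw [← M.innerB_star, M.innerB_smulB_right, star_mul, M.innerB_star]

theorem innerB_smulB_smulB (x y : X) (b c : B) :
    M.innerB (M.smulB x b) (M.smulB y c) = star b * M.innerB x y * c := by
  rw [M.innerB_smulB_right, M.innerB_smulB_left]

theorem smulA_innerA_smulB (x y z : X) (b : B) :
    M.smulA (M.innerA (M.smulB x b) y) z = M.smulB x (b * M.innerB y z) := by
  rw [M.compat, M.smulB_mul]

theorem innerB_smulB_self_mem {I : Submodule ℂ B} (hIleft : ∀ b c : B, b ∈ I → c * b ∈ I)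
    (x : X) {b : B} (hb : b ∈ I) : M.innerB (M.smulB x b) (M.smulB x b) ∈ I := by
  rw [innerB_smulB_smulB]
  exact hIleft b _ hb

theorem tensor_eq_zero_of_map_innerB_self_eq_zero
    {𝓗 𝓗' : Type*} [NormedAddCommGroup 𝓗] [InnerProductSpace ℂ 𝓗]
    [NormedAddCommGroup 𝓗'] [InnerProductSpace ℂ 𝓗']
    {π : B → (𝓗 →L[ℂ] 𝓗)} {t : X → 𝓗 → 𝓗'}
    (htinner : ∀ (x y : X) (h k : 𝓗),
      (inner ℂ (t x h) (t y k) : ℂ) = inner ℂ h (π (M.innerB x y) k))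
    {x : X} (hx : π (M.innerB x x) = 0) (h : 𝓗) : t x h = 0 := by
  rw [← inner_self_eq_zero (𝕜 := ℂ), htinner, hx, zero_apply, inner_zero_right]

end ImprimitivityBimodule

theorem rieffel_induction_kernel_general {A B X : Type*}
    [NonUnitalCStarAlgebra A] [NonUnitalCStarAlgebra B]
    [NormedAddCommGroup X] [Module ℂ X] [CompleteSpace X]
    (M : ImprimitivityBimodule A B X)
    {𝓗 : Type*} [NormedAddCommGroup 𝓗] [InnerProductSpace ℂ 𝓗]
    -- the representation `π` of `B` on `𝓗`
    (π : B → (𝓗 →L[ℂ] 𝓗))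
    -- the ideal `I ⊴ B`, contained in `ker π`
    (I : Submodule ℂ B)
    (hIleft : ∀ b c : B, b ∈ I → c * b ∈ I)
    (hIright : ∀ b c : B, b ∈ I → b * c ∈ I)
    (hIker : ∀ b ∈ I, π b = 0)
    -- the induced representation `X-Ind π` of `A` on `𝓗' = X ⊗_B 𝓗`
    {𝓗' : Type*} [NormedAddCommGroup 𝓗'] [InnerProductSpace ℂ 𝓗']
    (ρ : A → (𝓗' →L[ℂ] 𝓗'))
    (hρadd : ∀ a a', ρ (a + a') = ρ a + ρ a')
    (hρsmul : ∀ (c : ℂ) a, ρ (c • a) = c • ρ a)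
    (hρcont : Continuous ρ)
    (t : X → 𝓗 → 𝓗')
    (htdense : Dense (↑(Submodule.span ℂ {v : 𝓗' | ∃ x h, v = t x h}) : Set 𝓗'))
    (htinner : ∀ (x y : X) (h k : 𝓗),
      (inner ℂ (t x h) (t y k) : ℂ) = inner ℂ h (π (M.innerB x y) k))
    (htact : ∀ (a : A) (x : X) (h : 𝓗), ρ a (t x h) = t (M.smulA a x) h) :
    -- conclusion: `X-Ind(I) ⊆ ker (X-Ind π)`
    ∀ a ∈ closure ↑(Submodule.span ℂ
        {a : A | ∃ x y i, i ∈ I ∧ a = M.innerA (M.smulB x i) y}),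
      ρ a = 0 := by
  let ρL : A →L[ℂ] (𝓗' →L[ℂ] 𝓗') :=
    { toFun := ρ, map_add' := hρadd, map_smul' := hρsmul, cont := hρcont }
  have hρL_generator : Set.EqOn ρL 0 {a | ∃ x y i, i ∈ I ∧ a = M.innerA (M.smulB x i) y} := by
    rintro _ ⟨x, y, i, hi, rfl⟩
    refine ContinuousLinearMap.ext_on htdense (g := 0) ?_
    rintro _ ⟨z, h, rfl⟩
    change ρ _ (t z h) = 0
    rw [htact, M.smulA_innerA_smulB]
    exact M.tensor_eq_zero_of_map_innerB_self_eq_zero htinner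
      (hIker _ (M.innerB_smulB_self_mem hIleft x (hIright i _ hi))) h
  exact fun a ha => ContinuousLinearMap.eqOn_closure_span (f := ρL) (g := 0) hρL_generator ha

/-- if `π` is a representation of `B` with `I ⊆ ker π` for an ideal
`I ⊴ B`, then `X-Ind(I) ⊆ ker(X-Ind π)`, where `X-Ind π` is the induced
representation of `A` (realized on any Hilbert space `𝓗'` receiving a densely-spanning
map `t : X → 𝓗 → 𝓗'` implementing the interior tensor product `X ⊗_B 𝓗`). -/
theorem rieffel_induction_kernel {A B X : Type*}
    [NonUnitalCStarAlgebra A] [NonUnitalCStarAlgebra B]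
    [NormedAddCommGroup X] [Module ℂ X] [CompleteSpace X]
    (M : ImprimitivityBimodule A B X)
    {𝓗 : Type*} [NormedAddCommGroup 𝓗] [InnerProductSpace ℂ 𝓗] [CompleteSpace 𝓗]
    -- the representation `π` of `B` on `𝓗`
    (π : B → (𝓗 →L[ℂ] 𝓗))
    (hπadd : ∀ b b', π (b + b') = π b + π b')
    (hπsmul : ∀ (c : ℂ) b, π (c • b) = c • π b)
    (hπmul : ∀ b b', π (b * b') = (π b).comp (π b'))
    (hπstar : ∀ b (h k : 𝓗), inner ℂ (π b h) k = (inner ℂ h (π (star b) k) : ℂ))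
    -- the ideal `I ⊴ B`, contained in `ker π`
    (I : Submodule ℂ B) (hIclosed : IsClosed (I : Set B))
    (hIleft : ∀ b c : B, b ∈ I → c * b ∈ I)
    (hIright : ∀ b c : B, b ∈ I → b * c ∈ I)
    (hIker : ∀ b ∈ I, π b = 0)
    -- the induced representation `X-Ind π` of `A` on `𝓗' = X ⊗_B 𝓗`
    {𝓗' : Type*} [NormedAddCommGroup 𝓗'] [InnerProductSpace ℂ 𝓗'] [CompleteSpace 𝓗']
    (ρ : A → (𝓗' →L[ℂ] 𝓗'))
    (hρadd : ∀ a a', ρ (a + a') = ρ a + ρ a')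
    (hρsmul : ∀ (c : ℂ) a, ρ (c • a) = c • ρ a)
    (hρcont : Continuous ρ)
    (t : X → 𝓗 → 𝓗')
    (htdense : Dense (↑(Submodule.span ℂ {v : 𝓗' | ∃ x h, v = t x h}) : Set 𝓗'))
    (htinner : ∀ (x y : X) (h k : 𝓗),
      (inner ℂ (t x h) (t y k) : ℂ) = inner ℂ h (π (M.innerB x y) k))
    (htact : ∀ (a : A) (x : X) (h : 𝓗), ρ a (t x h) = t (M.smulA a x) h) :
    -- conclusion: `X-Ind(I) ⊆ ker (X-Ind π)`
    ∀ a ∈ closure ↑(Submodule.span ℂ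
        {a : A | ∃ x y i, i ∈ I ∧ a = M.innerA (M.smulB x i) y}),
      ρ a = 0 :=
  rieffel_induction_kernel_general M π I hIleft hIright hIker ρ hρadd hρsmul hρcont t htdense
    htinner htact
end

section
/- Let A be a C*-algebra and p, q = 1 − p complementary full projections in the multiplier algebra M(A). Then pAq is a pAp–qAq imprimitivity bimodule with inner products ⟨x,y⟩_{pAp} = x y* and ⟨x,y⟩_{qAq} = x* y; in particular pAp and qAq are Morita equivalent. -/
/-!
Write `⟨x, y⟩ = x y*` on `pAq`. Its values lie in the corner `pAp`, and the identity
`p (a q b) p = (p a q) (p b* q)*` shows that compressing by `p` sends the generators of the ideal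
generated by `qAq` onto inner products; since `q` is full, this ideal is dense in `A`, so by
continuity the inner products span a dense subspace of `pAp`. The `qAq`-valued inner product
`x* y` is the same construction with the roles of `p` and `q` exchanged, because
`(p x q)* (p y q) = (q x* p) (q y* p)*`. The remaining axioms are associativity and the
C*-identity.
-/

section

variable {R M : Type*} [CommSemiring R] [Semiring M] [Algebra R M]

theorem LinearMap.continuous_mulLeftRight [TopologicalSpace M] [ContinuousMul M] (e f : M) :
    Continuous (LinearMap.mulLeftRight R (e, f)) :=
  (continuous_const.mul continuous_id).mul continuous_const

namespace Submodule

def corner (A : Submodule R M) (e : M) : Submodule R M :=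
  A ⊓ LinearMap.eqLocus (LinearMap.mulLeftRight R (e, e)) LinearMap.id

theorem mem_corner {A : Submodule R M} {e m : M} :
    m ∈ A.corner e ↔ m ∈ A ∧ e * m * e = m :=
  Iff.rfl

theorem isClosed_corner [TopologicalSpace M] [ContinuousMul M] [T2Space M]
    {A : Submodule R M} (hA : IsClosed (A : Set M)) (e : M) : IsClosed (A.corner e : Set M) :=
  hA.inter (isClosed_eq (LinearMap.continuous_mulLeftRight e e) continuous_id)

end Submodule

open Submodule

variable [StarRing M]

theorem mul_star_mem_corner {A : Submodule R M}
    (hAleft : ∀ a m : M, a ∈ A → m * a ∈ A) (hAright : ∀ a m : M, a ∈ A → a * m ∈ A)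
    {e : M} (he : IsStarProjection e) (f : M) {x : M} (hx : x ∈ A) (y : M) :
    e * x * f * star (e * y * f) ∈ A.corner e := by
  refine mem_corner.2 ⟨hAright _ _ (hAright _ _ (hAleft _ _ hx)), ?_⟩
  simp only [star_mul, he.isSelfAdjoint.star_eq, mul_assoc, he.isIdempotentElem.eq,
    he.isIdempotentElem.mul_self_mul]

theorem star_mul_eq_mul_star {e f : M} (he : IsSelfAdjoint e) (hf : IsSelfAdjoint f) (x y : M) :
    star (e * x * f) * (e * y * f) = f * star x * e * star (f * star y * e) := by
  simp only [star_mul, star_star, he.star_eq, hf.star_eq, mul_assoc]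

theorem setOf_star_mul_eq_setOf_mul_star {A : Submodule R M}
    (hAstar : ∀ a : M, a ∈ A → star a ∈ A) {e f : M} (he : IsSelfAdjoint e)
    (hf : IsSelfAdjoint f) :
    {m : M | ∃ x ∈ A, ∃ y ∈ A, m = star (e * x * f) * (e * y * f)} =
      {m : M | ∃ x ∈ A, ∃ y ∈ A, m = f * x * e * star (f * y * e)} := by
  ext m
  constructor
  · rintro ⟨x, hx, y, hy, rfl⟩
    exact ⟨star x, hAstar x hx, star y, hAstar y hy, star_mul_eq_mul_star he hf x y⟩
  · rintro ⟨x, hx, y, hy, rfl⟩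
    refine ⟨star x, hAstar x hx, star y, hAstar y hy, ?_⟩
    rw [star_mul_eq_mul_star he hf, star_star, star_star]

theorem closure_span_mul_star_eq_corner [TopologicalSpace M] [ContinuousMul M] [T2Space M]
    {A : Submodule R M} (hAclosed : IsClosed (A : Set M))
    (hAleft : ∀ a m : M, a ∈ A → m * a ∈ A) (hAright : ∀ a m : M, a ∈ A → a * m ∈ A)
    (hAstar : ∀ a : M, a ∈ A → star a ∈ A) {e f : M} (he : IsStarProjection e)
    (hf : IsStarProjection f)
    (hfull : closure ↑(span R {m : M | ∃ a ∈ A, ∃ b ∈ A, m = a * (f * b)}) = (A : Set M)) :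
    closure ↑(span R {m : M | ∃ x ∈ A, ∃ y ∈ A, m = e * x * f * star (e * y * f)}) =
      (A.corner e : Set M) := by
  refine subset_antisymm (closure_minimal (span_le.2 ?_) (isClosed_corner hAclosed e)) ?_
  · rintro _ ⟨x, hx, y, -, rfl⟩
    exact mul_star_mem_corner hAleft hAright he f hx y
  · intro m hm
    obtain ⟨hmA, hm⟩ := mem_corner.1 hm
    have hmaps : Set.MapsTo (LinearMap.mulLeftRight R (e, e))
        (span R {m : M | ∃ a ∈ A, ∃ b ∈ A, m = a * (f * b)})
        (span R {m : M | ∃ x ∈ A, ∃ y ∈ A, m = e * x * f * star (e * y * f)}) := by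
      refine span_le (p := (span R _).comap (LinearMap.mulLeftRight R (e, e))) |>.2 ?_
      rintro _ ⟨a, ha, b, hb, rfl⟩
      refine subset_span ⟨a, ha, star b, hAstar b hb, ?_⟩
      simp only [LinearMap.mulLeftRight_apply, star_mul, star_star, he.isSelfAdjoint.star_eq,
        hf.isSelfAdjoint.star_eq, mul_assoc, hf.isIdempotentElem.mul_self_mul]
    rw [← SetLike.mem_coe, ← hfull] at hmA
    exact hm ▸ hmaps.closure (LinearMap.continuous_mulLeftRight e e) hmA

end

/-- Raeburn–Williams Theorem 3.19: if `p` and `q = 1 - p` are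
complementary full projections in the multiplier algebra `M` of a C*-algebra `A`
(realized as a closed two-sided ideal of the unital C*-algebra `M`), then `pAq` is a
`pAp`–`qAq` imprimitivity bimodule with inner products `⟨x,y⟩_{pAp} = x y*` and
`⟨x,y⟩_{qAq} = x* y`; in particular `pAp` and `qAq` are Morita equivalent. -/
theorem full_corners_imprimitivity {M : Type*} [CStarAlgebra M]
    -- `A` is a closed two-sided *-closed ideal of the unital C*-algebra `M`
    (A : Submodule ℂ M) (hAclosed : IsClosed (A : Set M))
    (hAleft : ∀ a m : M, a ∈ A → m * a ∈ A)
    (hAright : ∀ a m : M, a ∈ A → a * m ∈ A)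
    (hAstar : ∀ a : M, a ∈ A → star a ∈ A)
    -- `p` and `q = 1 - p` are complementary projections in `M`
    (p q : M) (hp : star p = p ∧ p * p = p) (hq : q = 1 - p)
    -- both projections are full: the closed ideal of `A` generated by the corner is `A`
    (hpfull : closure ↑(Submodule.span ℂ
      {m : M | ∃ a ∈ A, ∃ b ∈ A, m = a * (p * b)}) = (A : Set M))
    (hqfull : closure ↑(Submodule.span ℂ
      {m : M | ∃ a ∈ A, ∃ b ∈ A, m = a * (q * b)}) = (A : Set M)) :
    -- `pAq` is a `pAp`–`qAq` imprimitivity bimodule: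
    -- the corners are stable under the module actions,
    (∀ a x : M, a ∈ A → x ∈ A → (p * a * p) * (p * x * q) = p * ((p * a * p) * x) * q) ∧
    (∀ x b : M, x ∈ A → b ∈ A → (p * x * q) * (q * b * q) = p * (x * (q * b * q)) * q) ∧
    -- the inner products take values in the corners,
    (∀ x y : M, x ∈ A → y ∈ A →
      (p * x * q) * star (p * y * q) ∈ A ∧
      p * ((p * x * q) * star (p * y * q)) * p = (p * x * q) * star (p * y * q)) ∧
    (∀ x y : M, x ∈ A → y ∈ A →
      star (p * x * q) * (p * y * q) ∈ A ∧
      q * (star (p * x * q) * (p * y * q)) * q = star (p * x * q) * (p * y * q)) ∧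
    -- the compatibility (imprimitivity) condition `⟨x,y⟩_{pAp} · z = x · ⟨y,z⟩_{qAq}`,
    (∀ x y z : M, (x * star y) * z = x * (star y * z)) ∧
    -- positivity of the inner products,
    (∀ x : M, ∃ c : M, star (p * x * q) * (p * x * q) = star c * c) ∧
    (∀ x : M, ∃ c : M, (p * x * q) * star (p * x * q) = star c * c) ∧
    -- both inner products are full,
    (closure ↑(Submodule.span ℂ {m : M | ∃ x ∈ A, ∃ y ∈ A,
        m = (p * x * q) * star (p * y * q)}) =
      {m : M | m ∈ A ∧ p * m * p = m}) ∧
    (closure ↑(Submodule.span ℂ {m : M | ∃ x ∈ A, ∃ y ∈ A,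
        m = star (p * x * q) * (p * y * q)}) =
      {m : M | m ∈ A ∧ q * m * q = m}) ∧
    -- and the C*-norm condition `‖x‖² = ‖⟨x,x⟩‖` holds on `pAq`
    (∀ x : M, ‖p * x * q‖ ^ 2 = ‖star (p * x * q) * (p * x * q)‖) := by
  have hP : IsStarProjection p := ⟨hp.2, hp.1⟩
  have hQ : IsStarProjection q := hq ▸ hP.one_sub
  have hswap := setOf_star_mul_eq_setOf_mul_star hAstar hP.isSelfAdjoint hQ.isSelfAdjoint
  refine ⟨fun a x _ _ => ?_, fun x b _ _ => ?_,
    fun x y hx _ => Submodule.mem_corner.1 (mul_star_mem_corner hAleft hAright hP q hx y),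
    fun x y hx _ => ?_, fun x y z => mul_assoc _ _ _, fun x => ⟨p * x * q, rfl⟩,
    fun x => ⟨star (p * x * q), by rw [star_star]⟩,
    closure_span_mul_star_eq_corner hAclosed hAleft hAright hAstar hP hQ hqfull,
    hswap ▸ closure_span_mul_star_eq_corner hAclosed hAleft hAright hAstar hQ hP hpfull,
    fun x => by rw [sq, ← CStarRing.norm_star_mul_self]⟩
  · simp only [mul_assoc, hP.isIdempotentElem.mul_self_mul]
  · simp only [mul_assoc, hQ.isIdempotentElem.mul_self_mul, hQ.isIdempotentElem.eq]
  · rw [star_mul_eq_mul_star hP.isSelfAdjoint hQ.isSelfAdjoint]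
    exact Submodule.mem_corner.1 (mul_star_mem_corner hAleft hAright hQ p (hAstar x hx) (star y))
end
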